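/- arXiv:1101.5402 — 3 statements merged into one kernel-verified Lean document; each statement's English description precedes it below -/
import Mathlib

section
/- (Positivity of ⟨χ, L₋χ⟩ for odd χ, from the proof of Lemma 2.1.) Let W : ℝ → ℝ be continuous, and let φ ∈ C²(ℝ,ℝ) be even with φ(x) > 0 for all x ∈ ℝ and −φ''(x) + W(x)φ(x) = 0 for all x ∈ ℝ. Let χ ∈ C²(ℝ,ℝ) be odd, compactly supported, and not identically zero. Then ∫_ℝ χ(x)(−χ''(x) + W(x)χ(x)) dx > 0. -/
/-!
Write `χ = φ u` with `u = χ / φ`, which is possible because the ground state `φ` never vanishes.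
Since `-φ'' + Wφ = 0`, the quadratic form becomes `χ (-χ'' + Wχ) = (φ u')² - (φ² u u')'`, and the
derivative integrates to zero by compact support. So `∫ χ (-χ'' + Wχ) = ∫ (φ u')²`, which is positive
unless `u' ≡ 0`; but then the compactly supported `u` would vanish, and so would `χ`.
-/

open Set Filter MeasureTheory

theorem HasCompactSupport.eq_zero_of_deriv_eq_zero {E : Type*} [NormedAddCommGroup E]
    [NormedSpace ℝ E] {f : ℝ → E} (hf : HasCompactSupport f) (hd : Differentiable ℝ f)
    (h : ∀ x, deriv f x = 0) : f = 0 := by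
  obtain ⟨y, hy⟩ : ∃ y, y ∉ tsupport f := by
    by_contra! hall
    exact hf.isCompact.ne_univ (eq_univ_of_forall hall)
  funext x
  rw [is_const_of_deriv_eq_zero hd h x y, image_eq_zero_of_notMem_tsupport hy, Pi.zero_apply]

theorem HasCompactSupport.integral_deriv_eq_zero {E : Type*} [NormedAddCommGroup E]
    [NormedSpace ℝ E] [CompleteSpace E] {f : ℝ → E} (hf : HasCompactSupport f)
    (hd : ContDiff ℝ 1 f) : ∫ x, deriv f x = 0 :=
  integral_of_hasDerivAt_of_tendsto
      (fun x => (hd.differentiable one_ne_zero x).hasDerivAt)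
      (hd.continuous_deriv_one.integrable_of_hasCompactSupport hf.deriv)
      (hf.is_zero_at_infty.mono_left atBot_le_cocompact)
      (hf.is_zero_at_infty.mono_left atTop_le_cocompact)
    |>.trans (sub_self 0)

theorem HasCompactSupport.sq_mul_deriv {φ u : ℝ → ℝ} (hu : HasCompactSupport u) :
    HasCompactSupport fun x => (φ x * deriv u x) ^ 2 :=
  (hu.deriv.mul_left (f := φ)).comp_left (g := fun t : ℝ => t ^ 2) (zero_pow two_ne_zero)

theorem deriv_deriv_mul {f g : ℝ → ℝ} (hf : ContDiff ℝ 2 f) (hg : ContDiff ℝ 2 g) (x : ℝ) :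
    deriv (deriv (fun y => f y * g y)) x =
      deriv (deriv f) x * g x + 2 * (deriv f x * deriv g x) + f x * deriv (deriv g) x := by
  have hf1 := hf.differentiable two_ne_zero
  have hg1 := hg.differentiable two_ne_zero
  have hf2 := (hf.deriv' (n := 1)).differentiable one_ne_zero
  have hg2 := (hg.deriv' (n := 1)).differentiable one_ne_zero
  have hfg : deriv (fun y => f y * g y) = fun y => deriv f y * g y + f y * deriv g y :=
    funext fun y => deriv_fun_mul (hf1 y) (hg1 y)
  have h : HasDerivAt (fun y => deriv f y * g y + f y * deriv g y)
      (deriv (deriv f) x * g x + deriv f x * deriv g x +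
        (deriv f x * deriv g x + f x * deriv (deriv g) x)) x :=
    ((hf2 x).hasDerivAt.mul (hg1 x).hasDerivAt).add ((hf1 x).hasDerivAt.mul (hg2 x).hasDerivAt)
  rw [hfg, h.deriv]
  ring

theorem mul_schrodinger_eq_sq_sub_deriv {W φ u : ℝ → ℝ} (hφ : ContDiff ℝ 2 φ)
    (hu : ContDiff ℝ 2 u) {x : ℝ} (hground : -deriv (deriv φ) x + W x * φ x = 0) :
    φ x * u x * (-deriv (deriv (fun y => φ y * u y)) x + W x * (φ x * u x)) =
      (φ x * deriv u x) ^ 2 - deriv (fun y => φ y ^ 2 * (u y * deriv u y)) x := by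
  have hφ1 := hφ.differentiable two_ne_zero x
  have hu1 := hu.differentiable two_ne_zero x
  have hu2 := (hu.deriv' (n := 1)).differentiable one_ne_zero x
  have hF : HasDerivAt (fun y => φ y ^ 2 * (u y * deriv u y))
      (2 * φ x * deriv φ x * (u x * deriv u x) +
        φ x ^ 2 * (deriv u x * deriv u x + u x * deriv (deriv u) x)) x :=
    ((hφ1.hasDerivAt.fun_pow 2).fun_mul (hu1.hasDerivAt.fun_mul hu2.hasDerivAt)).congr_deriv
      (by norm_num)
  rw [deriv_deriv_mul hφ hu, hF.deriv]
  linear_combination (φ x * u x ^ 2) * hground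

theorem integral_mul_schrodinger_eq_integral_sq {W φ u χ : ℝ → ℝ} (hφ : ContDiff ℝ 2 φ)
    (hground : ∀ x, -deriv (deriv φ) x + W x * φ x = 0) (hu : ContDiff ℝ 2 u)
    (husupp : HasCompactSupport u) (hχ : ∀ x, χ x = φ x * u x) :
    ∫ x, χ x * (-deriv (deriv χ) x + W x * χ x) = ∫ x, (φ x * deriv u x) ^ 2 := by
  obtain rfl : χ = fun y => φ y * u y := funext hχ
  have hsq : Integrable fun x => (φ x * deriv u x) ^ 2 :=
    ((hφ.continuous.mul (hu.continuous_deriv one_le_two)).pow 2).integrable_of_hasCompactSupport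
      husupp.sq_mul_deriv
  have hF : ContDiff ℝ 1 fun y => φ y ^ 2 * (u y * deriv u y) :=
    ((hφ.of_le one_le_two).pow 2).mul ((hu.of_le one_le_two).mul (hu.deriv' (n := 1)))
  have hF_supp : HasCompactSupport fun y => φ y ^ 2 * (u y * deriv u y) :=
    (husupp.mul_right (f' := deriv u)).mul_left (f := fun y => φ y ^ 2)
  calc ∫ x, φ x * u x * (-deriv (deriv (fun y => φ y * u y)) x + W x * (φ x * u x))
      = ∫ x, ((φ x * deriv u x) ^ 2 - deriv (fun y => φ y ^ 2 * (u y * deriv u y)) x) :=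
        integral_congr_ae (.of_forall fun x => mul_schrodinger_eq_sq_sub_deriv hφ hu (hground x))
    _ = ∫ x, (φ x * deriv u x) ^ 2 := by
        rw [integral_sub hsq (hF.continuous_deriv_one.integrable_of_hasCompactSupport hF_supp.deriv),
          hF_supp.integral_deriv_eq_zero hF, sub_zero]

theorem integral_sq_mul_deriv_pos {φ u : ℝ → ℝ} (hφ : Continuous φ) (hφ0 : ∀ x, φ x ≠ 0)
    (hu : ContDiff ℝ 1 u) (husupp : HasCompactSupport u) (hne : u ≠ 0) :
    0 < ∫ x, (φ x * deriv u x) ^ 2 := by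
  obtain ⟨x₀, hx₀⟩ : ∃ x₀, deriv u x₀ ≠ 0 := by
    by_contra! h
    exact hne (husupp.eq_zero_of_deriv_eq_zero (hu.differentiable one_ne_zero) h)
  exact ((hφ.mul hu.continuous_deriv_one).pow 2).integral_pos_of_hasCompactSupport_nonneg_nonzero
    husupp.sq_mul_deriv (fun x => sq_nonneg _) (pow_ne_zero 2 (mul_ne_zero (hφ0 x₀) hx₀))

theorem quadratic_form_positive_odd_general
    (W : ℝ → ℝ)
    (φ : ℝ → ℝ) (hφ : ContDiff ℝ 2 φ) (hφpos : ∀ x, 0 < φ x)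
    (hground : ∀ x : ℝ, -(deriv (deriv φ) x) + W x * φ x = 0)
    (χ : ℝ → ℝ) (hχ : ContDiff ℝ 2 χ)
    (hχsupp : HasCompactSupport χ) (hχne : ∃ x, χ x ≠ 0) :
    0 < ∫ x : ℝ, χ x * (-(deriv (deriv χ) x) + W x * χ x) := by
  have hφ0 : ∀ x, φ x ≠ 0 := fun x => (hφpos x).ne'
  have hu_supp : HasCompactSupport fun y => χ y / φ y := by
    simp only [div_eq_mul_inv]
    exact hχsupp.mul_right
  have hu_ne : (fun y => χ y / φ y) ≠ 0 := by
    obtain ⟨x, hx⟩ := hχne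
    exact fun h => hx (by simpa [hφ0 x] using congrFun h x)
  rw [integral_mul_schrodinger_eq_integral_sq hφ hground (hχ.div hφ hφ0) hu_supp
    fun x => (mul_div_cancel₀ _ (hφ0 x)).symm]
  exact integral_sq_mul_deriv_pos hφ.continuous hφ0 ((hχ.div hφ hφ0).of_le one_le_two) hu_supp
    hu_ne

/-- (Positivity of `⟨χ, L₋ χ⟩` for odd `χ`.) If the even positive function
`φ` solves `-φ'' + Wφ = 0` and `χ` is odd, `C²`, compactly supported and not identically
zero, then `∫ χ (-χ'' + W χ) > 0`. -/
theorem quadratic_form_positive_odd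
    (W : ℝ → ℝ) (hW : Continuous W)
    (φ : ℝ → ℝ) (hφ : ContDiff ℝ 2 φ) (hφeven : ∀ x, φ (-x) = φ x) (hφpos : ∀ x, 0 < φ x)
    (hground : ∀ x : ℝ, -(deriv (deriv φ) x) + W x * φ x = 0)
    (χ : ℝ → ℝ) (hχ : ContDiff ℝ 2 χ) (hχodd : ∀ x, χ (-x) = -χ x)
    (hχsupp : HasCompactSupport χ) (hχne : ∃ x, χ x ≠ 0) :
    0 < ∫ x : ℝ, χ x * (-(deriv (deriv χ) x) + W x * χ x) :=
  quadratic_form_positive_odd_general W φ hφ hφpos hground χ hχ hχsupp hχne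
end

section
/- (Identity (4.27).) Let φ ∈ C²(ℝ,ℝ) solve the stationary NLS equation with parameter E, and let Λ² ∈ ℝ and ψ, χ ∈ C²(ℝ,ℝ) be such that ψ, ψ', χ, χ' are square-integrable, tend to 0 as |x| → ∞, and L₊(E)ψ = −Λ²χ and L₋(E)χ = ψ hold pointwise on ℝ. Then ∫_ℝ ψ(x)² dx + Λ² ∫_ℝ χ(x)² dx = 2p ∫_ℝ φ(x)^{2p} ψ(x)χ(x) dx. -/
/-!
The Wronskian `W = χ'ψ - ψ'χ` satisfies `W' = χ''ψ - ψ''χ = 2p φ^{2p} ψχ - ψ² - Λ²χ²` by the two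
equations, and `W → 0` at `±∞`, so `∫ W' = 0`. As `φ` may be unbounded, the one real issue is
the integrability of `φ^{2p} ψχ`. Testing each equation against its own solution,
`(u'u)' = u'² + u u''`, bounds `∫_{-n}^{n} φ^{2p} u²` uniformly in `n` (the weight is nonnegative and
`u'u → 0`), so `φ^{2p} ψ²` and `φ^{2p} χ²` are integrable, and `2|ψχ| ≤ ψ² + χ²` does the rest.
-/

open Set Filter MeasureTheory

theorem integrable_mul_mul_of_integrable_mul_sq {α : Type*} [MeasurableSpace α] {μ : Measure α}
    {w f g : α → ℝ} (hw : ∀ x, 0 ≤ w x) (hm : AEStronglyMeasurable (fun x => w x * f x * g x) μ)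
    (hf : Integrable (fun x => w x * f x ^ 2) μ) (hg : Integrable (fun x => w x * g x ^ 2) μ) :
    Integrable (fun x => w x * f x * g x) μ := by
  refine ((hf.add hg).div_const 2).mono' hm (Eventually.of_forall fun x => ?_)
  rw [Pi.add_apply, Real.norm_eq_abs, abs_le]
  constructor <;> nlinarith [mul_nonneg (hw x) (sq_nonneg (f x - g x)),
    mul_nonneg (hw x) (sq_nonneg (f x + g x))]

theorem integrable_of_hasDerivAt_eq_sub_of_tendsto {f g F : ℝ → ℝ} {a b : ℝ}
    (hf : Continuous f) (hf0 : ∀ x, 0 ≤ f x) (hg : Integrable g)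
    (hF : ∀ x, HasDerivAt F (g x - f x) x)
    (hbot : Tendsto F atBot (nhds a)) (htop : Tendsto F atTop (nhds b)) : Integrable f := by
  have hlim : Tendsto (fun n : ℕ => F (-n) - F n) atTop (nhds (a - b)) :=
    (hbot.comp (tendsto_neg_atTop_atBot.comp tendsto_natCast_atTop_atTop)).sub
      (htop.comp tendsto_natCast_atTop_atTop)
  refine integrable_of_intervalIntegral_norm_bounded ((∫ x, ‖g x‖) + (a - b + 1))
    (fun _ => hf.integrableOn_Ioc) (tendsto_neg_atTop_atBot.comp tendsto_natCast_atTop_atTop)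
    tendsto_natCast_atTop_atTop ?_
  filter_upwards [hlim.eventually (eventually_le_nhds (lt_add_one _))] with n hn
  have hn0 : -(n : ℝ) ≤ n := neg_le_self n.cast_nonneg
  have hftc : ∫ x in -(n : ℝ)..n, (g x - f x) = F n - F (-n) :=
    intervalIntegral.integral_eq_sub_of_hasDerivAt (fun x _ => hF x)
      (hg.intervalIntegrable.sub (hf.intervalIntegrable _ _))
  rw [intervalIntegral.integral_sub hg.intervalIntegrable (hf.intervalIntegrable _ _)] at hftc
  have hg_le : ∫ x in -(n : ℝ)..n, g x ≤ ∫ x, ‖g x‖ :=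
    calc ∫ x in -(n : ℝ)..n, g x ≤ ∫ x in -(n : ℝ)..n, ‖g x‖ :=
          intervalIntegral.integral_mono_on hn0 hg.intervalIntegrable
            hg.norm.intervalIntegrable fun x _ => Real.le_norm_self _
      _ = ∫ x in Ioc (-(n : ℝ)) n, ‖g x‖ := intervalIntegral.integral_of_le hn0
      _ ≤ ∫ x, ‖g x‖ := setIntegral_le_integral hg.norm (.of_forall fun x => norm_nonneg _)
  simp only [Function.comp_apply, Real.norm_of_nonneg (hf0 _)]
  linarith

theorem integral_eq_zero_of_hasDerivAt_of_tendsto_cocompact {E : Type*} [NormedAddCommGroup E]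
    [NormedSpace ℝ E] [CompleteSpace E] {W W' : ℝ → E} (hW : ∀ x, HasDerivAt W (W' x) x)
    (hW' : Integrable W') (h : Tendsto W (cocompact ℝ) (nhds 0)) : ∫ x, W' x = 0 := by
  simpa using integral_of_hasDerivAt_of_tendsto hW hW' (h.mono_left atBot_le_cocompact)
    (h.mono_left atTop_le_cocompact)

theorem hasDerivAt_deriv_mul_self {u : ℝ → ℝ} {x : ℝ} (hu : DifferentiableAt ℝ u x)
    (hu' : DifferentiableAt ℝ (deriv u) x) :
    HasDerivAt (fun y => deriv u y * u y) (deriv u x ^ 2 + u x * deriv (deriv u) x) x := by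
  refine (hu'.hasDerivAt.mul hu.hasDerivAt).congr_deriv ?_
  ring

theorem hasDerivAt_wronskian {u v : ℝ → ℝ} (hu : ContDiff ℝ 2 u) (hv : ContDiff ℝ 2 v) (x : ℝ) :
    HasDerivAt (fun y => deriv v y * u y - deriv u y * v y)
      (deriv (deriv v) x * u x - deriv (deriv u) x * v x) x := by
  have hu₁ := (hu.differentiable two_ne_zero x).hasDerivAt
  have hv₁ := (hv.differentiable two_ne_zero x).hasDerivAt
  refine ((hv.differentiable_deriv_two x).hasDerivAt.mul hu₁).sub
    ((hu.differentiable_deriv_two x).hasDerivAt.mul hv₁) |>.congr_deriv ?_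
  ring

theorem integrable_mul_sq_of_deriv_deriv_eq {u q w g : ℝ → ℝ} {M : ℝ} (hu : ContDiff ℝ 2 u)
    (hq : Continuous q) (hqM : ∀ x, |q x| ≤ M) (hw : Continuous w) (hw0 : ∀ x, 0 ≤ w x)
    (hode : ∀ x, deriv (deriv u) x = (q x - w x) * u x + g x)
    (hgu : Integrable fun x => g x * u x)
    (huL2 : Integrable fun x => u x ^ 2) (hu'L2 : Integrable fun x => deriv u x ^ 2)
    (hu0 : Tendsto u (cocompact ℝ) (nhds 0)) (hu'0 : Tendsto (deriv u) (cocompact ℝ) (nhds 0)) :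
    Integrable fun x => w x * u x ^ 2 := by
  have hqu : Integrable fun x => q x * u x ^ 2 :=
    huL2.bdd_mul hq.aestronglyMeasurable (.of_forall hqM)
  have hlim : Tendsto (fun x => deriv u x * u x) (cocompact ℝ) (nhds 0) := by
    simpa using hu'0.mul hu0
  refine integrable_of_hasDerivAt_eq_sub_of_tendsto (hw.mul (hu.continuous.pow 2))
    (fun x => mul_nonneg (hw0 x) (sq_nonneg _)) (hu'L2.add (hqu.add hgu)) (fun x => ?_)
    (hlim.mono_left atBot_le_cocompact) (hlim.mono_left atTop_le_cocompact)
  convert hasDerivAt_deriv_mul_self (hu.differentiable two_ne_zero x)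
    (hu.differentiable_deriv_two x) using 1
  rw [hode, Pi.add_apply, Pi.add_apply]
  ring

theorem integrable_mul_mul_of_deriv_deriv_eq_pair {ψ χ q w : ℝ → ℝ} {c lam2 M : ℝ}
    (hψ : ContDiff ℝ 2 ψ) (hχ : ContDiff ℝ 2 χ) (hq : Continuous q) (hqM : ∀ x, |q x| ≤ M)
    (hw : Continuous w) (hw0 : ∀ x, 0 ≤ w x) (hc : 0 < c)
    (hψ'' : ∀ x, deriv (deriv ψ) x = (q x - c * w x) * ψ x + lam2 * χ x)
    (hχ'' : ∀ x, deriv (deriv χ) x = (q x - w x) * χ x + -ψ x)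
    (hψL2 : Integrable fun x => ψ x ^ 2) (hψ'L2 : Integrable fun x => deriv ψ x ^ 2)
    (hχL2 : Integrable fun x => χ x ^ 2) (hχ'L2 : Integrable fun x => deriv χ x ^ 2)
    (hψ0 : Tendsto ψ (cocompact ℝ) (nhds 0)) (hψ'0 : Tendsto (deriv ψ) (cocompact ℝ) (nhds 0))
    (hχ0 : Tendsto χ (cocompact ℝ) (nhds 0)) (hχ'0 : Tendsto (deriv χ) (cocompact ℝ) (nhds 0)) :
    Integrable fun x => w x * ψ x * χ x := by
  have hψχ : Integrable fun x => ψ x * χ x := by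
    simpa using integrable_mul_mul_of_integrable_mul_sq (w := fun _ => 1) (fun _ => zero_le_one)
      ((continuous_const.mul hψ.continuous).mul hχ.continuous).aestronglyMeasurable
      (by simpa using hψL2) (by simpa using hχL2)
  have hwψ : Integrable fun x => w x * ψ x ^ 2 := by
    have h := integrable_mul_sq_of_deriv_deriv_eq (w := fun x => c * w x) hψ hq hqM
      (continuous_const.mul hw) (fun x => mul_nonneg hc.le (hw0 x)) hψ''
      ((hψχ.const_mul lam2).congr (.of_forall fun x => by ring)) hψL2 hψ'L2 hψ0 hψ'0
    exact (integrable_const_mul_iff (IsUnit.mk0 c hc.ne') _).mp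
      (h.congr (.of_forall fun x => by ring))
  have hwχ : Integrable fun x => w x * χ x ^ 2 :=
    integrable_mul_sq_of_deriv_deriv_eq hχ hq hqM hw hw0 hχ''
      (by simpa using hψχ.neg) hχL2 hχ'L2 hχ0 hχ'0
  exact integrable_mul_mul_of_integrable_mul_sq hw0
    ((hw.mul hψ.continuous).mul hχ.continuous).aestronglyMeasurable hwψ hwχ

theorem identity_4_27_general
    (p : ℕ) (V : ℝ → ℝ) (hVc : Continuous V) (hVb : ∃ M, ∀ x, |V x| ≤ M)
    (E lam2 : ℝ) (φ ψ χ : ℝ → ℝ)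
    (hφ : ContDiff ℝ 2 φ) (hψ : ContDiff ℝ 2 ψ) (hχ : ContDiff ℝ 2 χ)
    (hint : Integrable (fun x => (ψ x) ^ 2) ∧ Integrable (fun x => (deriv ψ x) ^ 2) ∧
            Integrable (fun x => (χ x) ^ 2) ∧ Integrable (fun x => (deriv χ x) ^ 2))
    (hdecay : Tendsto ψ (cocompact ℝ) (nhds 0) ∧ Tendsto (deriv ψ) (cocompact ℝ) (nhds 0) ∧
              Tendsto χ (cocompact ℝ) (nhds 0) ∧ Tendsto (deriv χ) (cocompact ℝ) (nhds 0))
    (heq1 : ∀ x : ℝ,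
      -(deriv (deriv ψ) x) + (V x - (2 * (p : ℝ) + 1) * φ x ^ (2 * p) + E) * ψ x
        = -lam2 * χ x)
    (heq2 : ∀ x : ℝ,
      -(deriv (deriv χ) x) + (V x - φ x ^ (2 * p) + E) * χ x = ψ x) :
    (∫ x : ℝ, (ψ x) ^ 2) + lam2 * (∫ x : ℝ, (χ x) ^ 2)
      = 2 * (p : ℝ) * ∫ x : ℝ, φ x ^ (2 * p) * ψ x * χ x := by
  obtain ⟨M, hM⟩ := hVb
  obtain ⟨hψL2, hψ'L2, hχL2, hχ'L2⟩ := hint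
  obtain ⟨hψ0, hψ'0, hχ0, hχ'0⟩ := hdecay
  have hψ'' : ∀ x, deriv (deriv ψ) x
      = (V x + E - (2 * p + 1) * φ x ^ (2 * p)) * ψ x + lam2 * χ x := fun x => by
    linarith [heq1 x]
  have hχ'' : ∀ x, deriv (deriv χ) x = (V x + E - φ x ^ (2 * p)) * χ x + -ψ x := fun x => by
    linarith [heq2 x]
  have hφψχ : Integrable fun x => φ x ^ (2 * p) * ψ x * χ x :=
    integrable_mul_mul_of_deriv_deriv_eq_pair hψ hχ (hVc.add continuous_const)
      (fun x => (abs_add_le _ _).trans (add_le_add_left (hM x) _)) (hφ.continuous.pow _)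
      (fun x => (even_two_mul p).pow_nonneg _) (by positivity) hψ'' hχ''
      hψL2 hψ'L2 hχL2 hχ'L2 hψ0 hψ'0 hχ0 hχ'0
  have hW : ∀ x, HasDerivAt (fun y => deriv χ y * ψ y - deriv ψ y * χ y)
      (2 * p * (φ x ^ (2 * p) * ψ x * χ x) - ψ x ^ 2 - lam2 * χ x ^ 2) x := fun x => by
    refine (hasDerivAt_wronskian hψ hχ x).congr_deriv ?_
    rw [hψ'' x, hχ'' x]
    ring
  have hzero := integral_eq_zero_of_hasDerivAt_of_tendsto_cocompact hW
    (((hφψχ.const_mul _).sub hψL2).sub (hχL2.const_mul lam2))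
    (by simpa using (hχ'0.mul hψ0).sub (hψ'0.mul hχ0))
  rw [integral_sub, integral_sub, integral_const_mul, integral_const_mul] at hzero
  · linarith
  exacts [hφψχ.const_mul _, hψL2, (hφψχ.const_mul _).sub hψL2, hχL2.const_mul _]

/-- (Identity (4.27).) If `L₊(E)ψ = -Λ²χ` and `L₋(E)χ = ψ` pointwise,
with `ψ, ψ', χ, χ'` square-integrable and decaying at infinity, then
`∫ ψ² + Λ² ∫ χ² = 2p ∫ φ^{2p} ψ χ`. -/
theorem identity_4_27
    (p : ℕ) (hp : 1 ≤ p) (V : ℝ → ℝ) (hVc : Continuous V) (hVb : ∃ M, ∀ x, |V x| ≤ M)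
    (E lam2 : ℝ) (φ ψ χ : ℝ → ℝ)
    (hφ : ContDiff ℝ 2 φ) (hψ : ContDiff ℝ 2 ψ) (hχ : ContDiff ℝ 2 χ)
    (hstat : ∀ x : ℝ,
      -(deriv (deriv φ) x) + V x * φ x - φ x ^ (2 * p + 1) + E * φ x = 0)
    (hint : Integrable (fun x => (ψ x) ^ 2) ∧ Integrable (fun x => (deriv ψ x) ^ 2) ∧
            Integrable (fun x => (χ x) ^ 2) ∧ Integrable (fun x => (deriv χ x) ^ 2))
    (hdecay : Tendsto ψ (cocompact ℝ) (nhds 0) ∧ Tendsto (deriv ψ) (cocompact ℝ) (nhds 0) ∧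
              Tendsto χ (cocompact ℝ) (nhds 0) ∧ Tendsto (deriv χ) (cocompact ℝ) (nhds 0))
    (heq1 : ∀ x : ℝ,
      -(deriv (deriv ψ) x) + (V x - (2 * (p : ℝ) + 1) * φ x ^ (2 * p) + E) * ψ x
        = -lam2 * χ x)
    (heq2 : ∀ x : ℝ,
      -(deriv (deriv χ) x) + (V x - φ x ^ (2 * p) + E) * χ x = ψ x) :
    (∫ x : ℝ, (ψ x) ^ 2) + lam2 * (∫ x : ℝ, (χ x) ^ 2)
      = 2 * (p : ℝ) * ∫ x : ℝ, φ x ^ (2 * p) * ψ x * χ x :=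
  identity_4_27_general p V hVc hVb E lam2 φ ψ χ hφ hψ hχ hint hdecay heq1 heq2
end

section
/- (Nonlinear Gronwall/continuation lemma of Section 4.2.) Let T > 0, a, b, c ≥ 0, and let z : [0,T] → [0,∞) be continuous with z(t) ≤ a + ∫₀ᵗ (b·z(s) + c·z(s)²) ds for all t ∈ [0,T]. If 2·a·c·T·e^{bT} ≤ log 2, then z(t) ≤ 2a·e^{bT} for all t ∈ [0,T]. -/
open Set MeasureTheory

/-- Linear integral-form Gronwall for a globally continuous function. -/
lemma lin_gronwall (T a K : ℝ) (ha : 0 ≤ a) (hK : 0 ≤ K)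
    (z : ℝ → ℝ) (hz : Continuous z) (hznn : ∀ t ∈ Icc (0 : ℝ) T, 0 ≤ z t)
    (h : ∀ t ∈ Icc (0 : ℝ) T, z t ≤ a + ∫ s in (0 : ℝ)..t, K * z s) :
    ∀ t ∈ Icc (0 : ℝ) T, z t ≤ a * Real.exp (K * t) := by
  set g : ℝ → ℝ := fun s => K * z s with hg_def
  have hg : Continuous g := continuous_const.mul hz
  set w : ℝ → ℝ := fun u => a + ∫ s in (0 : ℝ)..u, g s with hw_def
  have hw : ∀ u : ℝ, HasDerivAt w (g u) u := by
    intro u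
    exact (intervalIntegral.integral_hasDerivAt_right (hg.intervalIntegrable 0 u)
      hg.stronglyMeasurable.stronglyMeasurableAtFilter hg.continuousAt).const_add a
  have hmain := norm_le_gronwallBound_of_norm_deriv_right_le (f := w) (f' := g)
    (δ := a) (K := K) (ε := 0) (a := 0) (b := T)
    (fun u _ => (hw u).continuousAt.continuousWithinAt)
    (fun x _ => (hw x).hasDerivWithinAt)
    (by simp [hw_def, abs_of_nonneg ha])
    ?_
  · intro t ht
    have hwnn : 0 ≤ w t := by
      have : 0 ≤ ∫ s in (0 : ℝ)..t, g s :=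
        intervalIntegral.integral_nonneg ht.1 fun s hs =>
          mul_nonneg hK (hznn s ⟨hs.1, hs.2.trans ht.2⟩)
      simp only [hw_def]; linarith
    have := hmain t ht
    rw [Real.norm_eq_abs, abs_of_nonneg hwnn, gronwallBound_ε0, sub_zero] at this
    exact (h t ht).trans this
  · intro x hx
    have hx' : x ∈ Icc (0 : ℝ) T := ⟨hx.1, hx.2.le⟩
    have hznnx : 0 ≤ z x := hznn x hx'
    have hwnn : 0 ≤ w x := by
      have : 0 ≤ ∫ s in (0 : ℝ)..x, g s :=
        intervalIntegral.integral_nonneg hx.1 fun s hs =>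
          mul_nonneg hK (hznn s ⟨hs.1, hs.2.trans hx'.2⟩)
      simp only [hw_def]; linarith
    have hzw : z x ≤ w x := h x hx'
    rw [Real.norm_eq_abs, Real.norm_eq_abs, abs_of_nonneg hwnn,
      abs_of_nonneg (mul_nonneg hK hznnx)]
    nlinarith

/-- (Nonlinear Gronwall/continuation lemma of Section 4.2.) If a
continuous nonnegative `z` satisfies `z(t) ≤ a + ∫₀ᵗ (b z + c z²)` on `[0,T]` and
`2acT e^{bT} ≤ log 2`, then `z(t) ≤ 2a e^{bT}` on `[0,T]`. -/
theorem nonlinear_gronwall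
    (T a b c : ℝ) (hT : 0 < T) (ha : 0 ≤ a) (hb : 0 ≤ b) (hc : 0 ≤ c)
    (z : ℝ → ℝ) (hzcont : ContinuousOn z (Icc 0 T)) (hznn : ∀ t ∈ Icc (0 : ℝ) T, 0 ≤ z t)
    (hineq : ∀ t ∈ Icc (0 : ℝ) T,
      z t ≤ a + ∫ s in (0 : ℝ)..t, (b * z s + c * z s ^ 2))
    (hsmall : 2 * a * c * T * Real.exp (b * T) ≤ Real.log 2) :
    ∀ t ∈ Icc (0 : ℝ) T, z t ≤ 2 * a * Real.exp (b * T) := by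
  set M : ℝ := 2 * a * Real.exp (b * T) with hM_def
  have hexp1 : (1 : ℝ) ≤ Real.exp (b * T) :=
    Real.one_le_exp (mul_nonneg hb hT.le)
  have hM0 : 0 ≤ M := by positivity
  have haM : a ≤ M := by nlinarith
  -- clamp function
  set π : ℝ → ℝ := fun s => max 0 (min s T) with hπ_def
  have hπcont : Continuous π := continuous_const.max (continuous_id.min continuous_const)
  have hπmem : ∀ s, π s ∈ Icc (0 : ℝ) T := by
    intro s
    constructor
    · exact le_max_left _ _
    · exact max_le hT.le (min_le_right _ _)
  have hπeq : ∀ t ∈ Icc (0 : ℝ) T, π t = t := by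
    intro t ht
    simp only [hπ_def]
    rw [min_eq_left ht.2, max_eq_right ht.1]
  set Z : ℝ → ℝ := fun s => z (π s) with hZ_def
  have hZcont : Continuous Z := hzcont.comp_continuous hπcont hπmem
  have hZeq : ∀ t ∈ Icc (0 : ℝ) T, Z t = z t := fun t ht => by
    simp only [hZ_def]; rw [hπeq t ht]
  have hZnn : ∀ s, 0 ≤ Z s := fun s => hznn _ (hπmem s)
  have hZineq : ∀ t ∈ Icc (0 : ℝ) T,
      Z t ≤ a + ∫ s in (0 : ℝ)..t, (b * Z s + c * Z s ^ 2) := by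
    intro t ht
    rw [hZeq t ht]
    refine (hineq t ht).trans (le_of_eq ?_)
    congr 1
    refine intervalIntegral.integral_congr fun s hs => ?_
    rw [uIcc_of_le ht.1] at hs
    rw [hZeq s ⟨hs.1, hs.2.trans ht.2⟩]
  -- key bootstrap
  have key : ∀ M' : ℝ, 0 ≤ M' → ∀ τ, τ ∈ Icc (0 : ℝ) T →
      (∀ s ∈ Icc (0 : ℝ) τ, Z s ≤ M') →
      ∀ t ∈ Icc (0 : ℝ) τ, Z t ≤ a * Real.exp ((b + c * M') * t) := by
    intro M' hM' τ hτ hbd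
    refine lin_gronwall τ a (b + c * M') ha (by positivity) Z hZcont
      (fun s hs => hZnn s) ?_
    intro t ht
    have ht' : t ∈ Icc (0 : ℝ) T := ⟨ht.1, ht.2.trans hτ.2⟩
    refine (hZineq t ht').trans ?_
    have hmono : (∫ s in (0 : ℝ)..t, (b * Z s + c * Z s ^ 2)) ≤
        ∫ s in (0 : ℝ)..t, (b + c * M') * Z s := by
      refine intervalIntegral.integral_mono_on ht.1 ?_ ?_ ?_
      · exact ((continuous_const.mul hZcont).add
          (continuous_const.mul (hZcont.pow 2))).intervalIntegrable 0 t
      · exact (continuous_const.mul hZcont).intervalIntegrable 0 t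
      · intro s hs
        have h1 : Z s ≤ M' := hbd s ⟨hs.1, hs.2.trans ht.2⟩
        have h2 : 0 ≤ Z s := hZnn s
        nlinarith [mul_le_mul_of_nonneg_left h1 (mul_nonneg hc h2)]
    linarith
  -- global max of Z on [0,T]
  obtain ⟨x₀, hx₀, hmax⟩ := isCompact_Icc.exists_isMaxOn (nonempty_Icc.2 hT.le)
    (hZcont.continuousOn (s := Icc (0:ℝ) T))
  set M₀ : ℝ := Z x₀ with hM₀_def
  have hM₀nn : 0 ≤ M₀ := hZnn x₀
  have hbd₀ : ∀ s ∈ Icc (0 : ℝ) T, Z s ≤ M₀ := fun s hs => hmax hs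
  -- suffices to bound Z
  suffices hZM : ∀ t ∈ Icc (0 : ℝ) T, Z t ≤ M by
    intro t ht; rw [← hZeq t ht]; exact hZM t ht
  rcases ha.eq_or_lt with haz | hapos
  · -- a = 0
    intro t ht
    have h0 := key M₀ hM₀nn T ⟨hT.le, le_refl T⟩ hbd₀ t ht
    rw [← haz] at h0
    rw [hM_def, ← haz]
    simpa using h0
  rcases hc.eq_or_lt with hcz | hcpos
  · -- c = 0
    intro t ht
    have := key M₀ hM₀nn T ⟨hT.le, le_refl T⟩ hbd₀ t ht
    rw [← hcz] at this
    simp only [zero_mul, add_zero] at this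
    refine this.trans ?_
    rw [hM_def]
    have : Real.exp (b * t) ≤ Real.exp (b * T) :=
      Real.exp_le_exp.2 (mul_le_mul_of_nonneg_left ht.2 hb)
    nlinarith
  -- main case: a > 0, c > 0
  have hMpos : 0 < M := by positivity
  have hcM : 0 < c * M := mul_pos hcpos hMpos
  have hexpcMT : Real.exp (c * M * T) ≤ 2 := by
    rw [← Real.exp_log (by norm_num : (0:ℝ) < 2)]
    apply Real.exp_le_exp.2
    calc c * M * T = 2 * a * c * T * Real.exp (b * T) := by rw [hM_def]; ring
      _ ≤ Real.log 2 := hsmall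
  set S : Set ℝ := {t | t ∈ Icc (0 : ℝ) T ∧ ∀ s ∈ Icc (0 : ℝ) t, Z s ≤ M} with hS_def
  have h0S : (0 : ℝ) ∈ S := by
    refine ⟨⟨le_refl 0, hT.le⟩, fun s hs => ?_⟩
    have hs0 : s = 0 := le_antisymm hs.2 hs.1
    subst hs0
    have := hZineq 0 ⟨le_refl 0, hT.le⟩
    simpa using this.trans (by simpa using haM)
  have hSbdd : BddAbove S := ⟨T, fun x hx => hx.1.2⟩
  set t₀ : ℝ := sSup S with ht₀_def
  have ht₀0 : 0 ≤ t₀ := le_csSup hSbdd h0S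
  have ht₀T : t₀ ≤ T := csSup_le ⟨0, h0S⟩ fun x hx => hx.1.2
  have hlt : ∀ s, 0 ≤ s → s < t₀ → Z s ≤ M := by
    intro s hs0 hst
    obtain ⟨τ, hτS, hsτ⟩ := exists_lt_of_lt_csSup ⟨0, h0S⟩ hst
    exact hτS.2 s ⟨hs0, hsτ.le⟩
  have ht₀S : ∀ s ∈ Icc (0 : ℝ) t₀, Z s ≤ M := by
    intro s hs
    rcases hs.2.lt_or_eq with h | h
    · exact hlt s hs.1 h
    · subst h
      rcases ht₀0.eq_or_lt with h0 | h0
      · rw [← h0]; exact h0S.2 0 ⟨le_refl 0, le_refl 0⟩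
      · have hcw : ContinuousWithinAt Z (Iio t₀) t₀ :=
          hZcont.continuousAt.continuousWithinAt
        refine le_of_tendsto hcw ?_
        filter_upwards [self_mem_nhdsWithin,
          mem_nhdsWithin_of_mem_nhds (Ioi_mem_nhds h0)] with u hu1 hu2
        exact hlt u (le_of_lt hu2) hu1
  have ht₀eq : t₀ = T := by
    by_contra hne
    have ht₀lt : t₀ < T := lt_of_le_of_ne ht₀T hne
    have hboot := key M hM0 t₀ ⟨ht₀0, ht₀T⟩ ht₀S t₀ ⟨ht₀0, le_refl t₀⟩
    have hstrict : Z t₀ < M := by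
      have h1 : a * Real.exp ((b + c * M) * t₀) < a * Real.exp ((b + c * M) * T) :=
        mul_lt_mul_of_pos_left (Real.exp_lt_exp.2
          (mul_lt_mul_of_pos_left ht₀lt (by positivity))) hapos
      have h2 : a * Real.exp ((b + c * M) * T) ≤ M := by
        calc a * Real.exp ((b + c * M) * T)
            = a * Real.exp (b * T) * Real.exp (c * M * T) := by
              rw [mul_assoc, ← Real.exp_add]; ring_nf
          _ ≤ a * Real.exp (b * T) * 2 := by
              refine mul_le_mul_of_nonneg_left hexpcMT (by positivity)
          _ = M := by rw [hM_def]; ring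
      exact hboot.trans_lt (h1.trans_le h2)
    have hev : ∀ᶠ u in nhds t₀, Z u < M :=
      (hZcont.continuousAt (x := t₀)).eventually_lt_const hstrict
    obtain ⟨ε, hε, hball⟩ := Metric.eventually_nhds_iff.1 hev
    set t₁ : ℝ := min T (t₀ + ε / 2) with ht₁_def
    have ht₁gt : t₀ < t₁ := lt_min ht₀lt (by linarith)
    have ht₁S : t₁ ∈ S := by
      refine ⟨⟨ht₀0.trans ht₁gt.le, min_le_left _ _⟩, fun s hs => ?_⟩
      rcases le_or_gt s t₀ with h | h
      · exact ht₀S s ⟨hs.1, h⟩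
      · refine (hball ?_).le
        have hs2 : s ≤ t₀ + ε / 2 := hs.2.trans (min_le_right _ _)
        rw [Real.dist_eq, abs_of_pos (by linarith)]
        linarith
    exact absurd (le_csSup hSbdd ht₁S) (not_le.2 ht₁gt)
  intro t ht
  exact ht₀S t ⟨ht.1, ht.2.trans_eq ht₀eq.symm⟩
end
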